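/- Let A be a real n×n matrix, B a real n×1 matrix, C a real 1×n matrix, and φ : ℝ → ℝ Lipschitz continuous with constant L ≥ 0. Suppose there exist a real symmetric positive-definite n×n matrix P, μ > 0, and K ∈ ℝ such that P(A − BKC) + (A − BKC)ᵀP ≤ −μP (as quadratic forms) and PB = Cᵀ. Let x : ℝ → ℝⁿ solve ẋ = A x + B φ(C x) and let z : ℝ → ℝⁿ solve ż = A z + B φ(C z) + B u with the perfect-channel controller u(t) = −(K + L)·(C z(t) − C x(t)). Then synchronization is exponential: ‖z(t) − x(t)‖ ≤ √(λ_max(P)/λ_min(P))·‖z(0) − x(0)‖·e^{−μt/2} for all t ≥ 0, where λ_min(P), λ_max(P) are the smallest and largest eigenvalues of P. -/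

import Mathlib

/-!
The Lyapunov function `V(e) = eᵀPe` of the synchronization error `e = z − x` decays like
`e^{−μt}`. Along the error dynamics `ė = (A − BKC)e + (Δ − L·Ce)B`, where `Δ = φ(Cz) − φ(Cx)`,
the relation `PB = Cᵀ` turns the input term of `V̇` into `2(Δ − L·Ce)·Ce`, which the Lipschitz
bound on `φ` makes nonpositive; the remaining part is at most `−μV` by the passification
inequality. Bounding `V` between `λ_min(P)‖e‖²` and `λ_max(P)‖e‖²` gives the estimate.
-/

open Matrix

namespace Matrix

variable {m : Type*} [Fintype m]

theorem dotProduct_mul_add_transpose_mul_mulVec (P M : Matrix m m ℝ) (v : m → ℝ) :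
    v ⬝ᵥ (P * M + Mᵀ * P) *ᵥ v = M *ᵥ v ⬝ᵥ P *ᵥ v + v ⬝ᵥ P *ᵥ (M *ᵥ v) := by
  rw [add_mulVec, dotProduct_add, ← mulVec_mulVec, ← mulVec_mulVec, dotProduct_mulVec v Mᵀ,
    vecMul_transpose, add_comm]

theorem IsSymm.dotProduct_mulVec_comm {P : Matrix m m ℝ} (hP : P.IsSymm) (v w : m → ℝ) :
    v ⬝ᵥ P *ᵥ w = w ⬝ᵥ P *ᵥ v := by
  rw [dotProduct_mulVec, ← mulVec_transpose, hP.eq, dotProduct_comm]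

variable [DecidableEq m] {P : Matrix m m ℝ}

theorem IsHermitian.exists_dotProduct_mulVec_eq_sum_eigenvalues (hP : P.IsHermitian)
    (v : m → ℝ) : ∃ w : m → ℝ,
      v ⬝ᵥ P *ᵥ v = ∑ i, hP.eigenvalues i * w i ^ 2 ∧ v ⬝ᵥ v = ∑ i, w i ^ 2 := by
  set U : Matrix m m ℝ := (hP.eigenvectorUnitary : Matrix m m ℝ)
  have hUt : star U = Uᵀ := rfl
  have hUU : U * Uᵀ = 1 := Unitary.mul_star_self_of_mem hP.eigenvectorUnitary.2
  have hdot : ∀ y, v ⬝ᵥ U *ᵥ y = Uᵀ *ᵥ v ⬝ᵥ y := fun y => by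
    rw [dotProduct_mulVec, mulVec_transpose]
  refine ⟨Uᵀ *ᵥ v, ?_, ?_⟩
  · have hPv : P *ᵥ v = U *ᵥ (diagonal hP.eigenvalues *ᵥ (Uᵀ *ᵥ v)) := by
      conv_lhs => rw [hP.spectral_theorem, Unitary.conjStarAlgAut_apply]
      simp [← hUt, mulVec_mulVec, Matrix.mul_assoc, U]
    rw [hPv, hdot]
    simp only [dotProduct, mulVec_diagonal]
    exact Finset.sum_congr rfl fun i _ => by ring
  · have hv : v ⬝ᵥ v = v ⬝ᵥ U *ᵥ (Uᵀ *ᵥ v) := by rw [mulVec_mulVec, hUU, one_mulVec]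
    rw [hv, hdot, dotProduct]
    exact Finset.sum_congr rfl fun i _ => by ring

theorem IsHermitian.iInf_eigenvalues_mul_dotProduct_le (hP : P.IsHermitian) (v : m → ℝ) :
    (⨅ i, hP.eigenvalues i) * (v ⬝ᵥ v) ≤ v ⬝ᵥ P *ᵥ v := by
  obtain ⟨w, hPv, hv⟩ := hP.exists_dotProduct_mulVec_eq_sum_eigenvalues v
  rw [hPv, hv, Finset.mul_sum]
  gcongr with i
  exact ciInf_le (Finite.bddBelow_range _) i

theorem IsHermitian.dotProduct_mulVec_le_iSup_eigenvalues_mul (hP : P.IsHermitian)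
    (v : m → ℝ) : v ⬝ᵥ P *ᵥ v ≤ (⨆ i, hP.eigenvalues i) * (v ⬝ᵥ v) := by
  obtain ⟨w, hPv, hv⟩ := hP.exists_dotProduct_mulVec_eq_sum_eigenvalues v
  rw [hPv, hv, Finset.mul_sum]
  gcongr with i
  exact le_ciSup (Finite.bddAbove_range _) i

theorem PosDef.iInf_eigenvalues_pos [Nonempty m] (hP : P.PosDef) :
    0 < ⨅ i, hP.1.eigenvalues i := by
  obtain ⟨j, hj⟩ := Finite.exists_min hP.1.eigenvalues
  exact (hP.eigenvalues_pos j).trans_le (le_ciInf hj)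

end Matrix

section Derivatives

variable {m : Type*} [Fintype m] {f g : ℝ → m → ℝ} {f' g' : m → ℝ} {t : ℝ}

theorem HasDerivAt.dotProduct (hf : HasDerivAt f f' t) (hg : HasDerivAt g g' t) :
    HasDerivAt (fun s => f s ⬝ᵥ g s) (f' ⬝ᵥ g t + f t ⬝ᵥ g') t := by
  simp only [_root_.dotProduct, ← Finset.sum_add_distrib]
  exact HasDerivAt.fun_sum fun i _ => (hasDerivAt_pi.1 hf i).mul (hasDerivAt_pi.1 hg i)

theorem HasDerivAt.matrix_mulVec (P : Matrix m m ℝ) (hf : HasDerivAt f f' t) :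
    HasDerivAt (fun s => P *ᵥ f s) (P *ᵥ f') t :=
  hasDerivAt_pi.2 fun i =>
    HasDerivAt.fun_sum fun j _ => (hasDerivAt_pi.1 hf j).const_mul (P i j)

end Derivatives

theorem le_mul_exp_of_hasDerivAt_le_mul {V V' : ℝ → ℝ} {a : ℝ}
    (hV : ∀ t, HasDerivAt V (V' t) t) (hV' : ∀ t, V' t ≤ a * V t) {t : ℝ} (ht : 0 ≤ t) :
    V t ≤ V 0 * Real.exp (a * t) := by
  have hW : ∀ s, HasDerivAt (fun s => V s * Real.exp (-(a * s)))
      (V' s * Real.exp (-(a * s)) + V s * (Real.exp (-(a * s)) * -(a * 1))) s := fun s =>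
    (hV s).mul ((hasDerivAt_id s).const_mul a).neg.exp
  have hanti : Antitone fun s => V s * Real.exp (-(a * s)) := by
    refine antitone_of_deriv_nonpos (fun s => (hW s).differentiableAt) fun s => ?_
    rw [(hW s).deriv]
    nlinarith [hV' s, Real.exp_pos (-(a * s))]
  have := hanti ht
  simp only [mul_zero, neg_zero, Real.exp_zero, mul_one, Real.exp_neg] at this
  rwa [mul_inv_le_iff₀ (Real.exp_pos _)] at this

theorem sqrt_le_sqrt_mul_sqrt_mul_exp_half {X Y c r : ℝ} (hc : 0 ≤ c)
    (h : X ≤ c * Y * Real.exp r) : √X ≤ √c * √Y * Real.exp (r / 2) := by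
  calc √X ≤ √(c * Y * Real.exp r) := Real.sqrt_le_sqrt h
    _ = √c * √Y * Real.exp (r / 2) := by
      rw [Real.sqrt_mul' _ (Real.exp_pos r).le, Real.sqrt_mul hc, Real.exp_half]

theorem mul_le_mul_sq_of_abs_le {a b L : ℝ} (h : |a| ≤ L * |b|) : a * b ≤ L * b ^ 2 :=
  calc a * b ≤ |a| * |b| := (le_abs_self _).trans_eq (abs_mul a b)
    _ ≤ L * |b| * |b| := by gcongr
    _ = L * b ^ 2 := by rw [mul_assoc, abs_mul_abs_self, sq]

theorem passified_lyapunov_derivative_le {m : Type*} [Fintype m] {A P : Matrix m m ℝ}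
    {B C v : m → ℝ} {K μ c : ℝ} (hP : P.IsSymm) (hPB : P *ᵥ B = C)
    (hLyap : v ⬝ᵥ (P * (A - K • vecMulVec B C) + (A - K • vecMulVec B C)ᵀ * P) *ᵥ v
      ≤ -μ * (v ⬝ᵥ P *ᵥ v))
    (hc : (c + K * (C ⬝ᵥ v)) * (C ⬝ᵥ v) ≤ 0) :
    (A *ᵥ v + c • B) ⬝ᵥ P *ᵥ v + v ⬝ᵥ P *ᵥ (A *ᵥ v + c • B) ≤ -μ * (v ⬝ᵥ P *ᵥ v) := by
  set M := A - K • vecMulVec B C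
  have hAv : A *ᵥ v + c • B = M *ᵥ v + (c + K * (C ⬝ᵥ v)) • B := by
    simp only [M, sub_mulVec, smul_mulVec, vecMulVec_mulVec, op_smul_eq_smul, smul_smul,
      add_smul]
    abel
  have hBv : B ⬝ᵥ P *ᵥ v = C ⬝ᵥ v := by
    rw [hP.dotProduct_mulVec_comm, hPB, dotProduct_comm]
  rw [dotProduct_mul_add_transpose_mul_mulVec] at hLyap
  rw [hAv, add_dotProduct, mulVec_add, dotProduct_add, smul_dotProduct, mulVec_smul,
    dotProduct_smul, hBv, hPB, dotProduct_comm v C, smul_eq_mul]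
  linarith

theorem perfect_channel_exponential_sync_general {n : ℕ}
    (A : Matrix (Fin n) (Fin n) ℝ) (B C : Fin n → ℝ)
    (φ : ℝ → ℝ) (L : ℝ)
    (hφ : ∀ y y' : ℝ, |φ y - φ y'| ≤ L * |y - y'|)
    (P : Matrix (Fin n) (Fin n) ℝ) (μ K : ℝ)
    (hP : P.PosDef)
    (hLyap : ∀ v : Fin n → ℝ,
      v ⬝ᵥ (P * (A - K • vecMulVec B C) + (A - K • vecMulVec B C)ᵀ * P).mulVec v
        ≤ -μ * (v ⬝ᵥ P.mulVec v))
    (hPB : P.mulVec B = C)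
    (x z : ℝ → Fin n → ℝ)
    (hx : ∀ t : ℝ, HasDerivAt x (A.mulVec (x t) + φ (C ⬝ᵥ x t) • B) t)
    (hz : ∀ t : ℝ, HasDerivAt z
      (A.mulVec (z t) + φ (C ⬝ᵥ z t) • B
        + (-((K + L) * (C ⬝ᵥ z t - C ⬝ᵥ x t))) • B) t) :
    ∀ t ≥ (0 : ℝ), Real.sqrt (∑ i, (z t i - x t i) ^ 2)
      ≤ Real.sqrt ((⨆ i, hP.1.eigenvalues i) / (⨅ i, hP.1.eigenvalues i))
          * Real.sqrt (∑ i, (z 0 i - x 0 i) ^ 2) * Real.exp (-μ * t / 2) := by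
  intro t ht
  -- for `n = 0` the eigenvalue infimum is the junk value `0`, but both sides vanish
  rcases isEmpty_or_nonempty (Fin n) with hn | hn
  · simp
  set e := fun s => z s - x s
  set c := fun s => φ (C ⬝ᵥ z s) - φ (C ⬝ᵥ x s) - (K + L) * (C ⬝ᵥ e s)
  have hsum : ∀ s, ∑ i, (z s i - x s i) ^ 2 = e s ⬝ᵥ e s := fun s => by
    simp [e, dotProduct, sq]
  have he : ∀ s, HasDerivAt e (A *ᵥ e s + c s • B) s := fun s =>
    ((hz s).sub (hx s)).congr_deriv <| by
      simp only [e, c, mulVec_sub, dotProduct_sub]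
      module
  have hc : ∀ s, (c s + K * (C ⬝ᵥ e s)) * (C ⬝ᵥ e s) ≤ 0 := fun s => by
    have := mul_le_mul_sq_of_abs_le (hφ (C ⬝ᵥ z s) (C ⬝ᵥ x s))
    simp only [c, e, dotProduct_sub]
    linarith
  have hdecay := le_mul_exp_of_hasDerivAt_le_mul
    (fun s => (he s).dotProduct ((he s).matrix_mulVec P))
    (fun s => passified_lyapunov_derivative_le (isHermitian_iff_isSymm.1 hP.1) hPB
      (hLyap (e s)) (hc s)) ht
  have hlow := hP.1.iInf_eigenvalues_mul_dotProduct_le (e t)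
  have hhigh := hP.1.dotProduct_mulVec_le_iSup_eigenvalues_mul (e 0)
  have hmin := hP.iInf_eigenvalues_pos
  rw [hsum, hsum]
  refine sqrt_le_sqrt_mul_sqrt_mul_exp_half
    (div_nonneg (Real.iSup_nonneg fun i => (hP.eigenvalues_pos i).le) hmin.le) ?_
  rw [div_mul_eq_mul_div, div_mul_eq_mul_div, le_div_iff₀' hmin]
  calc _ ≤ e t ⬝ᵥ P *ᵥ e t := hlow
    _ ≤ e 0 ⬝ᵥ P *ᵥ e 0 * Real.exp (-μ * t) := hdecay
    _ ≤ _ := by gcongr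

/-- Exponential synchronization over a perfect channel: under the passification
relations `P(A−BKC) + (A−BKC)ᵀP ≤ −μP`, `PB = Cᵀ`, the controller
`u = −(K+L)(Cz − Cx)` yields
`‖z(t) − x(t)‖ ≤ √(λ_max(P)/λ_min(P))·‖z(0) − x(0)‖·e^{−μt/2}`,
with `‖·‖` the Euclidean norm. -/
theorem perfect_channel_exponential_sync {n : ℕ}
    (A : Matrix (Fin n) (Fin n) ℝ) (B C : Fin n → ℝ)
    (φ : ℝ → ℝ) (L : ℝ) (hL : 0 ≤ L)
    (hφ : ∀ y y' : ℝ, |φ y - φ y'| ≤ L * |y - y'|)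
    (P : Matrix (Fin n) (Fin n) ℝ) (μ K : ℝ)
    (hP : P.PosDef) (hμ : 0 < μ)
    (hLyap : ∀ v : Fin n → ℝ,
      v ⬝ᵥ (P * (A - K • vecMulVec B C) + (A - K • vecMulVec B C)ᵀ * P).mulVec v
        ≤ -μ * (v ⬝ᵥ P.mulVec v))
    (hPB : P.mulVec B = C)
    (x z : ℝ → Fin n → ℝ)
    (hx : ∀ t : ℝ, HasDerivAt x (A.mulVec (x t) + φ (C ⬝ᵥ x t) • B) t)
    (hz : ∀ t : ℝ, HasDerivAt z
      (A.mulVec (z t) + φ (C ⬝ᵥ z t) • B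
        + (-((K + L) * (C ⬝ᵥ z t - C ⬝ᵥ x t))) • B) t) :
    ∀ t ≥ (0 : ℝ), Real.sqrt (∑ i, (z t i - x t i) ^ 2)
      ≤ Real.sqrt ((⨆ i, hP.1.eigenvalues i) / (⨅ i, hP.1.eigenvalues i))
          * Real.sqrt (∑ i, (z 0 i - x 0 i) ^ 2) * Real.exp (-μ * t / 2) :=
  perfect_channel_exponential_sync_general A B C φ L hφ P μ K hP hLyap hPB x z hx hz
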